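/- Let D be a database instance in which all tuples are endogenous and Q a monotone Boolean query. For every S-repair D' of D with respect to ¬Q, every tuple in D \ D' is an actual cause for Q; and for every C-repair D'' of D with respect to ¬Q, every tuple in D \ D'' is a most responsible actual cause for Q. (Corollary 3(c)) -/

import Mathlib

open scoped Classical

variable {α : Type*} [DecidableEq α]

/-- A monotone Boolean query on database instances (finite sets of tuples). -/
def MonotoneQuery (Q : Finset α → Prop) : Prop :=
  ∀ ⦃X Y : Finset α⦄, X ⊆ Y → Q X → Q Y

/-- `Γ` is a contingency set for tuple `t` wrt query `Q`, instance `D`,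
endogenous part `Dn`. -/
def IsContingency (D Dn : Finset α) (Q : Finset α → Prop) (t : α) (Γ : Finset α) : Prop :=
  Γ ⊆ Dn ∧ t ∉ Γ ∧ Q (D \ Γ) ∧ ¬ Q (D \ (Γ ∪ {t}))

/-- `t` is an actual cause for `Q`. -/
def IsActualCause (D Dn : Finset α) (Q : Finset α → Prop) (t : α) : Prop :=
  t ∈ Dn ∧ ∃ Γ : Finset α, IsContingency D Dn Q t Γ

/-- Minimum cardinality of a contingency set for `t`. -/
noncomputable def minContingency (D Dn : Finset α) (Q : Finset α → Prop) (t : α) : ℕ :=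
  sInf {m : ℕ | ∃ Γ : Finset α, IsContingency D Dn Q t Γ ∧ Γ.card = m}

/-- Responsibility of `t`: `1/(1+m)` with `m` the minimum size of a contingency set,
and `0` if `t` is not an actual cause. -/
noncomputable def resp (D Dn : Finset α) (Q : Finset α → Prop) (t : α) : ℚ :=
  if IsActualCause D Dn Q t then 1 / (1 + (minContingency D Dn Q t : ℚ)) else 0

/-- `t` is a most responsible actual cause. -/
def IsMostResponsibleCause (D Dn : Finset α) (Q : Finset α → Prop) (t : α) : Prop :=
  IsActualCause D Dn Q t ∧ ∀ t' : α, ¬ resp D Dn Q t < resp D Dn Q t'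

/-- `D'` is an S-repair of `D` wrt the denial constraint `¬ Q`. -/
def IsSRepair (D : Finset α) (Q : Finset α → Prop) (D' : Finset α) : Prop :=
  D' ⊆ D ∧ ¬ Q D' ∧ ∀ D'' : Finset α, D'' ⊆ D → ¬ Q D'' → D' ⊆ D'' → D'' = D'

/-- `D'` is a C-repair of `D` wrt the denial constraint `¬ Q`. -/
def IsCRepair (D : Finset α) (Q : Finset α → Prop) (D' : Finset α) : Prop :=
  D' ⊆ D ∧ ¬ Q D' ∧ ∀ D'' : Finset α, D'' ⊆ D → ¬ Q D'' → D''.card ≤ D'.card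

/-- `Γ ∈ CT(t)`: `Γ` is an S-minimal contingency set for `t`. -/
def InCT (D Dn : Finset α) (Q : Finset α → Prop) (t : α) (Γ : Finset α) : Prop :=
  IsContingency D Dn Q t Γ ∧ ∀ Γ'' : Finset α, Γ'' ⊂ Γ → Q (D \ (Γ'' ∪ {t}))

/-- `𝔖(D)`: S-minimal subsets of `D` satisfying `Q`. -/
def Sfam (D : Finset α) (Q : Finset α → Prop) : Set (Finset α) :=
  {s | s ⊆ D ∧ Q s ∧ ∀ s' : Finset α, s' ⊂ s → ¬ Q s'}

/-- Subsets of `Dn` contained in some `s' ∈ 𝔖(D)` whose remainder is exogenous. -/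
def SnPre (D Dn Dx : Finset α) (Q : Finset α → Prop) : Set (Finset α) :=
  {s | s ⊆ Dn ∧ ∃ s' ∈ Sfam D Q, s ⊆ s' ∧ s' \ s ⊆ Dx}

/-- `𝔖ⁿ(D)`: the inclusion-minimal elements of `SnPre`. -/
def SnFam (D Dn Dx : Finset α) (Q : Finset α → Prop) : Set (Finset α) :=
  {s ∈ SnPre D Dn Dx Q | ∀ s' ∈ SnPre D Dn Dx Q, s' ⊆ s → s' = s}

/-- `H` is a hitting set for `𝔖ⁿ(D)`. -/
def IsHittingSet (D Dn Dx : Finset α) (Q : Finset α → Prop) (H : Finset α) : Prop :=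
  H ⊆ Dn ∧ ∀ s ∈ SnFam D Dn Dx Q, (H ∩ s).Nonempty

/-- `H` is an S-minimal hitting set for `𝔖ⁿ(D)`. -/
def IsSMinimalHittingSet (D Dn Dx : Finset α) (Q : Finset α → Prop) (H : Finset α) : Prop :=
  IsHittingSet D Dn Dx Q H ∧ ∀ H' : Finset α, H' ⊂ H → ¬ IsHittingSet D Dn Dx Q H'

/-- `H` is a minimum-cardinality hitting set for `𝔖ⁿ(D)`. -/
def IsMinimumHittingSet (D Dn Dx : Finset α) (Q : Finset α → Prop) (H : Finset α) : Prop :=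
  IsHittingSet D Dn Dx Q H ∧ ∀ H' : Finset α, IsHittingSet D Dn Dx Q H' → H.card ≤ H'.card

/-- `Δ` is a diagnosis for the diagnosis problem associated with `Q`. -/
def IsDiagnosis (D Dn : Finset α) (Q : Finset α → Prop) (Δ : Finset α) : Prop :=
  Δ ⊆ Dn ∧ ¬ Q (D \ Δ)

/-- `Δ ∈ 𝒟(ℳ,t)`: `Δ` is an inclusion-minimal diagnosis containing `t`. -/
def IsMinimalDiagnosisWith (D Dn : Finset α) (Q : Finset α → Prop) (t : α)
    (Δ : Finset α) : Prop :=
  IsDiagnosis D Dn Q Δ ∧ t ∈ Δ ∧ ∀ Δ' : Finset α, Δ' ⊂ Δ → ¬ IsDiagnosis D Dn Q Δ'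

/-- `Δ ∈ MCD(ℳ,t)`: `Δ` is an element of `𝒟(ℳ,t)` of minimum cardinality. -/
def IsMCDWith (D Dn : Finset α) (Q : Finset α → Prop) (t : α) (Δ : Finset α) : Prop :=
  IsMinimalDiagnosisWith D Dn Q t Δ ∧
    ∀ Δ' : Finset α, IsMinimalDiagnosisWith D Dn Q t Δ' → Δ.card ≤ Δ'.card

/-!
For a repair `D'` and `t ∈ D \ D'`, the set `(D \ D').erase t` is a contingency set for `t`:
deleting it from `D` leaves `insert t D'`, which satisfies `Q` by maximality of the repair, and
deleting `t` as well leaves `D'`, which does not. For a C-repair this set has `|D \ D'| - 1`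
elements, and no contingency set of any tuple is smaller: deleting it together with its tuple
falsifies `Q`, so leaves at most `|D'|` tuples.
-/

open Finset

section

variable {D D' Dn Γ : Finset α} {Q : Finset α → Prop} {t : α}

theorem minContingency_le (hΓ : IsContingency D Dn Q t Γ) : minContingency D Dn Q t ≤ #Γ :=
  Nat.sInf_le ⟨Γ, hΓ, rfl⟩

theorem le_minContingency {m : ℕ} (ht : IsActualCause D Dn Q t)
    (h : ∀ Γ, IsContingency D Dn Q t Γ → m ≤ #Γ) : m ≤ minContingency D Dn Q t := by
  obtain ⟨-, Γ₀, hΓ₀⟩ := ht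
  obtain ⟨Γ, hΓ, hcard⟩ := Nat.sInf_mem (s := {m | ∃ Γ, IsContingency D Dn Q t Γ ∧ #Γ = m})
    ⟨_, Γ₀, hΓ₀, rfl⟩
  exact (h Γ hΓ).trans_eq hcard

theorem resp_le_of_forall_le_card {m : ℕ} (h : ∀ Γ, IsContingency D Dn Q t Γ → m ≤ #Γ) :
    resp D Dn Q t ≤ 1 / (1 + m) := by
  unfold resp
  split_ifs with ht
  · have hm : (m : ℚ) ≤ minContingency D Dn Q t := by exact_mod_cast le_minContingency ht h
    exact one_div_le_one_div_of_le (by positivity) (by linarith)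
  · positivity

theorem resp_eq_of_forall_card_le (ht : t ∈ Dn) (hΓ : IsContingency D Dn Q t Γ)
    (hmin : ∀ Γ', IsContingency D Dn Q t Γ' → #Γ ≤ #Γ') :
    resp D Dn Q t = 1 / (1 + #Γ) := by
  rw [resp, if_pos ⟨ht, Γ, hΓ⟩,
    le_antisymm (minContingency_le hΓ) (le_minContingency ⟨ht, Γ, hΓ⟩ hmin)]

theorem isMostResponsibleCause_of_forall_card_le (ht : t ∈ Dn) (hΓ : IsContingency D Dn Q t Γ)
    (hmin : ∀ t' Γ', IsContingency D Dn Q t' Γ' → #Γ ≤ #Γ') :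
    IsMostResponsibleCause D Dn Q t := by
  refine ⟨⟨ht, Γ, hΓ⟩, fun t' => not_lt.mpr ?_⟩
  rw [resp_eq_of_forall_card_le ht hΓ (hmin t)]
  exact resp_le_of_forall_le_card (hmin t')

theorem isContingency_erase_sdiff (hD' : D' ⊆ D) (ht : t ∈ D \ D') (hnQ : ¬ Q D')
    (hQ : Q (insert t D')) : IsContingency D D Q t ((D \ D').erase t) := by
  have htD : t ∈ D := (mem_sdiff.mp ht).1
  refine ⟨(erase_subset _ _).trans sdiff_subset, notMem_erase t _, ?_, ?_⟩
  · rwa [sdiff_erase htD, Finset.sdiff_sdiff_eq_self hD']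
  · rwa [union_singleton, insert_erase ht, Finset.sdiff_sdiff_eq_self hD']

theorem IsSRepair.insert_of_mem_sdiff (hD' : IsSRepair D Q D') (ht : t ∈ D \ D') :
    Q (insert t D') := by
  obtain ⟨htD, htD'⟩ := mem_sdiff.mp ht
  by_contra hnQ
  exact htD' (hD'.2.2 _ (insert_subset htD hD'.1) hnQ (subset_insert t D') ▸ mem_insert_self t D')

theorem IsSRepair.isActualCause (hD' : IsSRepair D Q D') (ht : t ∈ D \ D') :
    IsActualCause D D Q t :=
  ⟨(mem_sdiff.mp ht).1, _, isContingency_erase_sdiff hD'.1 ht hD'.2.1 (hD'.insert_of_mem_sdiff ht)⟩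

theorem IsCRepair.insert_of_mem_sdiff (hD' : IsCRepair D Q D') (ht : t ∈ D \ D') :
    Q (insert t D') := by
  obtain ⟨htD, htD'⟩ := mem_sdiff.mp ht
  by_contra hnQ
  have hcard := hD'.2.2 _ (insert_subset htD hD'.1) hnQ
  rw [card_insert_of_notMem htD'] at hcard
  omega

theorem IsCRepair.card_sdiff_le_card_add_one (hD' : IsCRepair D Q D')
    (hΓ : IsContingency D Dn Q t Γ) : #(D \ D') ≤ #Γ + 1 := by
  have hcard : #(D \ (Γ ∪ {t})) ≤ #D' := hD'.2.2 _ sdiff_subset hΓ.2.2.2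
  have hsplit : #D ≤ #(D \ (Γ ∪ {t})) + #(Γ ∪ {t}) := card_le_card_sdiff_add_card
  have hunion : #(Γ ∪ {t}) ≤ #Γ + 1 := card_union_le Γ {t}
  rw [card_sdiff_of_subset hD'.1]
  omega

theorem IsCRepair.isMostResponsibleCause (hD' : IsCRepair D Q D') (ht : t ∈ D \ D') :
    IsMostResponsibleCause D D Q t := by
  have hΓ := isContingency_erase_sdiff hD'.1 ht hD'.2.1 (hD'.insert_of_mem_sdiff ht)
  refine isMostResponsibleCause_of_forall_card_le (mem_sdiff.mp ht).1 hΓ fun _ _ hΓ' => ?_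
  have hbound := hD'.card_sdiff_le_card_add_one hΓ'
  rw [card_erase_of_mem ht]
  omega

end

theorem removed_tuples_are_causes_general (D : Finset α) (Q : Finset α → Prop) :
    (∀ D' : Finset α, IsSRepair D Q D' → ∀ t ∈ D \ D', IsActualCause D D Q t) ∧
    (∀ D'' : Finset α, IsCRepair D Q D'' → ∀ t ∈ D \ D'',
      IsMostResponsibleCause D D Q t) :=
  ⟨fun _ hD' _ ht => hD'.isActualCause ht, fun _ hD'' _ ht => hD''.isMostResponsibleCause ht⟩

/-- Corollary 3(c): tuples removed by S-repairs are actual causes; tuples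
removed by C-repairs are most responsible actual causes. -/
theorem removed_tuples_are_causes (D : Finset α) (Q : Finset α → Prop)
    (hmono : MonotoneQuery Q) :
    (∀ D' : Finset α, IsSRepair D Q D' → ∀ t ∈ D \ D', IsActualCause D D Q t) ∧
    (∀ D'' : Finset α, IsCRepair D Q D'' → ∀ t ∈ D \ D'',
      IsMostResponsibleCause D D Q t) :=
  removed_tuples_are_causes_general D Q
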